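/- Let Ω ⊂ ℝ² be an open connected set avoiding 0 in its closure, let a⃗(x) = x, b⃗(x) = x^⊥ = (−x₂, x₁), and c⃗ ∈ ℝ² with c⃗ ≠ 0. Then the only smooth solutions w : Ω → ℝ of the pointwise algebraic compatibility equation |x|² w(x)² + 2 w(x) = 0 are w ≡ 0 and w(x) = −2/|x|², and neither of these satisfies the total differential equation ∇w = w² a⃗ + w b⃗ + c⃗ on Ω. -/

import Mathlib

/-- First partial derivative of `f : ℝ × ℝ → ℝ`. -/
noncomputable def pd1 (f : ℝ × ℝ → ℝ) (x : ℝ × ℝ) : ℝ :=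
  deriv (fun t => f (t, x.2)) x.1

/-- Second partial derivative of `f : ℝ × ℝ → ℝ`. -/
noncomputable def pd2 (f : ℝ × ℝ → ℝ) (x : ℝ × ℝ) : ℝ :=
  deriv (fun t => f (x.1, t)) x.2

/-- Euclidean gradient of `f : ℝ × ℝ → ℝ`. -/
noncomputable def grad (f : ℝ × ℝ → ℝ) (x : ℝ × ℝ) : ℝ × ℝ :=
  (pd1 f x, pd2 f x)

lemma grad_eq (x : ℝ × ℝ) (h : x.1 ^ 2 + x.2 ^ 2 ≠ 0) :
    grad (fun y => -2 / (y.1 ^ 2 + y.2 ^ 2)) x =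
      (4 * x.1 / (x.1 ^ 2 + x.2 ^ 2) ^ 2, 4 * x.2 / (x.1 ^ 2 + x.2 ^ 2) ^ 2) := by
  have h1 : HasDerivAt (fun t : ℝ => t ^ 2 + x.2 ^ 2) (2 * x.1) x.1 := by
    simpa using (hasDerivAt_pow 2 x.1).add_const (x.2 ^ 2)
  have h2 : HasDerivAt (fun t : ℝ => x.1 ^ 2 + t ^ 2) (2 * x.2) x.2 := by
    simpa using (hasDerivAt_pow 2 x.2).const_add (x.1 ^ 2)
  have d1 := ((hasDerivAt_const x.1 (-2 : ℝ)).div h1 h).deriv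
  have d2 := ((hasDerivAt_const x.2 (-2 : ℝ)).div h2 h).deriv
  have e1 : pd1 (fun y => -2 / (y.1 ^ 2 + y.2 ^ 2)) x = 4 * x.1 / (x.1 ^ 2 + x.2 ^ 2) ^ 2 := by
    rw [pd1]; refine d1.trans ?_; ring
  have e2 : pd2 (fun y => -2 / (y.1 ^ 2 + y.2 ^ 2)) x = 4 * x.2 / (x.1 ^ 2 + x.2 ^ 2) ^ 2 := by
    rw [pd2]; refine d2.trans ?_; ring
  rw [grad, e1, e2]

/-- with `a(x) = x`, `b(x) = x^⊥` on a connected open `Ω` avoiding `0` in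
its closure, the only smooth solutions of `|x|² w² + 2w = 0` are `w ≡ 0` and
`w = −2/|x|²`, and neither satisfies `∇w = w² a + w b + c` when `c ≠ 0`. -/
theorem stmt12 (Ω : Set (ℝ × ℝ)) (hΩ : IsOpen Ω) (hconn : IsConnected Ω)
    (h0 : (0 : ℝ × ℝ) ∉ closure Ω) (c : ℝ × ℝ) (hc : c ≠ 0) :
    (∀ w : ℝ × ℝ → ℝ, ContDiffOn ℝ (⊤ : ℕ∞) w Ω →
      (∀ x ∈ Ω, (x.1 ^ 2 + x.2 ^ 2) * w x ^ 2 + 2 * w x = 0) →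
      (∀ x ∈ Ω, w x = 0) ∨ (∀ x ∈ Ω, w x = -2 / (x.1 ^ 2 + x.2 ^ 2))) ∧
    ¬(∀ x ∈ Ω, grad (fun _ => (0 : ℝ)) x =
        ((0 : ℝ)) ^ 2 • x + (0 : ℝ) • (-x.2, x.1) + c) ∧
    ¬(∀ x ∈ Ω, grad (fun y => -2 / (y.1 ^ 2 + y.2 ^ 2)) x =
        (-2 / (x.1 ^ 2 + x.2 ^ 2)) ^ 2 • x +
          (-2 / (x.1 ^ 2 + x.2 ^ 2)) • (-x.2, x.1) + c) := by
  -- positivity of |x|² on Ω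
  have hdpos : ∀ x ∈ Ω, (0 : ℝ) < x.1 ^ 2 + x.2 ^ 2 := by
    intro x hx
    have hx0 : x ≠ 0 := by
      intro h; exact h0 (h ▸ subset_closure hx)
    have : x.1 ≠ 0 ∨ x.2 ≠ 0 := by
      by_contra h; push_neg at h
      exact hx0 (Prod.ext h.1 h.2)
    rcases this with h | h
    · positivity
    · positivity
  refine ⟨?_, ?_, ?_⟩
  · -- Part 1: classification
    intro w hw halg
    set u : Set (ℝ × ℝ) := Ω ∩ w ⁻¹' ({0} : Set ℝ)ᶜ with hu_def
    set v : Set (ℝ × ℝ) := Ω ∩ (fun x => w x * (x.1 ^ 2 + x.2 ^ 2) + 2) ⁻¹' ({0} : Set ℝ)ᶜ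
      with hv_def
    have hwc : ContinuousOn w Ω := hw.continuousOn
    have hgc : ContinuousOn (fun x : ℝ × ℝ => w x * (x.1 ^ 2 + x.2 ^ 2) + 2) Ω := by
      exact ((hwc.mul (by fun_prop)).add continuousOn_const)
    have huo : IsOpen u := hwc.isOpen_inter_preimage hΩ isOpen_compl_singleton
    have hvo : IsOpen v := hgc.isOpen_inter_preimage hΩ isOpen_compl_singleton
    have hdisj : Disjoint u v := by
      rw [Set.disjoint_left]
      rintro x ⟨hxΩ, hxu⟩ ⟨-, hxv⟩
      have := halg x hxΩ
      simp only [Set.mem_preimage, Set.mem_compl_iff, Set.mem_singleton_iff] at hxu hxv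
      apply hxv
      have : w x * ((x.1 ^ 2 + x.2 ^ 2) * w x + 2) = 0 := by linarith [halg x hxΩ]
      rcases mul_eq_zero.1 this with h | h
      · exact absurd h hxu
      · linarith
    have hcover : Ω ⊆ u ∪ v := by
      intro x hx
      by_cases h : w x = 0
      · right
        refine ⟨hx, ?_⟩
        simp [h]
      · left; exact ⟨hx, h⟩
    rcases hconn.isPreconnected.subset_or_subset huo hvo hdisj hcover with h | h
    · right
      intro x hx
      have hne := (h hx).2
      simp only [Set.mem_preimage, Set.mem_compl_iff, Set.mem_singleton_iff] at hne
      have halgx := halg x hx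
      have hd := (hdpos x hx).ne'
      have : w x * ((x.1 ^ 2 + x.2 ^ 2) * w x + 2) = 0 := by linarith
      rcases mul_eq_zero.1 this with h' | h'
      · exact absurd h' hne
      · field_simp
        linarith
    · left
      intro x hx
      have hne := (h hx).2
      simp only [Set.mem_preimage, Set.mem_compl_iff, Set.mem_singleton_iff] at hne
      have halgx := halg x hx
      have : w x * ((x.1 ^ 2 + x.2 ^ 2) * w x + 2) = 0 := by linarith
      rcases mul_eq_zero.1 this with h' | h'
      · exact h'
      · exact absurd (by linarith : w x * (x.1 ^ 2 + x.2 ^ 2) + 2 = 0) hne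
  · -- Part 2: w ≡ 0 does not solve
    intro h
    obtain ⟨x, hx⟩ := hconn.nonempty
    have := h x hx
    have hg : grad (fun _ => (0 : ℝ)) x = (0, 0) := by
      simp [grad, pd1, pd2]
    rw [hg] at this
    simp at this
    exact hc this.symm
  · -- Part 3: w = -2/|x|² does not solve
    intro h
    obtain ⟨x, hx⟩ := hconn.nonempty
    obtain ⟨ε, hε, hball⟩ := Metric.isOpen_iff.1 hΩ x hx
    set x' : ℝ × ℝ := (x.1 + ε / 2, x.2) with hx'def
    have hx' : x' ∈ Ω := by
      apply hball
      rw [Metric.mem_ball, hx'def, Prod.dist_eq]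
      apply max_lt
      · rw [Real.dist_eq, show x.1 + ε / 2 - x.1 = ε / 2 by ring,
          abs_of_pos (half_pos hε)]
        linarith
      · simpa using hε
    -- extract component equations at a point
    have key : ∀ y ∈ Ω, c.1 * (y.1 ^ 2 + y.2 ^ 2) = -2 * y.2 ∧
        c.2 * (y.1 ^ 2 + y.2 ^ 2) = 2 * y.1 := by
      intro y hy
      have hd := hdpos y hy
      have hne := hd.ne'
      have := h y hy
      rw [grad_eq y hne] at this
      rw [Prod.ext_iff] at this
      simp only [Prod.fst_add, Prod.snd_add, Prod.smul_fst, Prod.smul_snd, smul_eq_mul] at this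
      obtain ⟨h1, h2⟩ := this
      have hpow : (y.1 ^ 2 + y.2 ^ 2) ^ 4 ≠ 0 := pow_ne_zero _ hne
      constructor
      · field_simp at h1
        have h1' : (2 * y.2 + c.1 * (y.1 ^ 2 + y.2 ^ 2)) * (y.1 ^ 2 + y.2 ^ 2) ^ 4 = 0 := by
          linear_combination (-(y.1 ^ 2 + y.2 ^ 2) ^ 3) * h1
        rcases mul_eq_zero.1 h1' with h' | h'
        · linarith
        · exact absurd h' hpow
      · field_simp at h2
        have h2' : (-2 * y.1 + c.2 * (y.1 ^ 2 + y.2 ^ 2)) * (y.1 ^ 2 + y.2 ^ 2) ^ 4 = 0 := by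
          linear_combination (-(y.1 ^ 2 + y.2 ^ 2) ^ 3) * h2
        rcases mul_eq_zero.1 h2' with h' | h'
        · linarith
        · exact absurd h' hpow
    obtain ⟨e1, e2⟩ := key x hx
    obtain ⟨f1, f2⟩ := key x' hx'
    have f1' : c.1 * ((x.1 + ε / 2) ^ 2 + x.2 ^ 2) = -2 * x.2 := f1
    have f2' : c.2 * ((x.1 + ε / 2) ^ 2 + x.2 ^ 2) = 2 * (x.1 + ε / 2) := f2
    have hd := hdpos x hx
    have hd' := hdpos x' hx'
    have hd'2 : (0 : ℝ) < (x.1 + ε / 2) ^ 2 + x.2 ^ 2 := hd'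
    have hk : (c.1 ^ 2 + c.2 ^ 2) * (x.1 ^ 2 + x.2 ^ 2) = 4 :=
      mul_right_cancel₀ hd.ne'
        (by linear_combination (c.1 * (x.1 ^ 2 + x.2 ^ 2) - 2 * x.2) * e1 +
          (c.2 * (x.1 ^ 2 + x.2 ^ 2) + 2 * x.1) * e2 :
          ((c.1 ^ 2 + c.2 ^ 2) * (x.1 ^ 2 + x.2 ^ 2)) * (x.1 ^ 2 + x.2 ^ 2) =
            4 * (x.1 ^ 2 + x.2 ^ 2))
    have hk' : (c.1 ^ 2 + c.2 ^ 2) * ((x.1 + ε / 2) ^ 2 + x.2 ^ 2) = 4 :=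
      mul_right_cancel₀ hd'2.ne'
        (by linear_combination (c.1 * ((x.1 + ε / 2) ^ 2 + x.2 ^ 2) - 2 * x.2) * f1' +
          (c.2 * ((x.1 + ε / 2) ^ 2 + x.2 ^ 2) + 2 * (x.1 + ε / 2)) * f2' :
          ((c.1 ^ 2 + c.2 ^ 2) * ((x.1 + ε / 2) ^ 2 + x.2 ^ 2)) *
            ((x.1 + ε / 2) ^ 2 + x.2 ^ 2) =
            4 * ((x.1 + ε / 2) ^ 2 + x.2 ^ 2))
    have hcne : c.1 ^ 2 + c.2 ^ 2 ≠ 0 := by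
      intro h'; rw [h'] at hk; simp at hk
    have hdd : x.1 ^ 2 + x.2 ^ 2 = (x.1 + ε / 2) ^ 2 + x.2 ^ 2 :=
      mul_left_cancel₀ hcne (hk.trans hk'.symm)
    rw [← hdd] at f2'
    linarith [e2, f2']
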